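/- arXiv:1610.01274 — 3 statements merged into one kernel-verified Lean document; each statement's English description precedes it below -/
import Mathlib

section
/- Let C₁ ⊂ E₁ and C₂ ⊂ E₂ be projective cones with projective metrics θ₁, θ₂, and let L : E₁ → E₂ be a linear operator with L(C₁) ⊂ C₂. If D := sup{θ₂(L(v), L(w)) : v, w ∈ C₁} < ∞, then for all v, w ∈ C₁, θ₂(L(v), L(w)) ≤ (1 − e^{−D}) · θ₁(v, w). -/
open scoped ENNReal

variable {E : Type*} [AddCommGroup E] [Module ℝ E]

/-- The algebraic closure of a cone `C`: points `w` that can be approached from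
inside `C` along some direction `v ∈ C`, i.e. `w + tₙ • v ∈ C` for some positive
reals `tₙ → 0`. -/
def algClosure (C : Set E) : Set E :=
  {w | ∃ v ∈ C, ∀ ε : ℝ, 0 < ε → ∃ t : ℝ, 0 < t ∧ t < ε ∧ w + t • v ∈ C}

/-- `C ⊂ E \ {0}` is a projective cone: closed under positive scalar
multiplication and addition, and `C̄ ∩ (−C̄) = {0}`. -/
structure IsProjCone (C : Set E) : Prop where
  not_zero : (0 : E) ∉ C
  smul_mem : ∀ v ∈ C, ∀ t : ℝ, 0 < t → t • v ∈ C
  add_mem : ∀ v ∈ C, ∀ w ∈ C, v + w ∈ C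
  sep : algClosure C ∩ (-(algClosure C)) = {0}

/-- `α_C(v,w) = sup{t > 0 : w − t·v ∈ C}` (with `sup ∅ = 0`). -/
noncomputable def coneAlpha (C : Set E) (v w : E) : ℝ≥0∞ :=
  sSup {s : ℝ≥0∞ | ∃ t : ℝ, 0 < t ∧ s = ENNReal.ofReal t ∧ w - t • v ∈ C}

/-- `β_C(v,w) = inf{s > 0 : s·v − w ∈ C}` (with `inf ∅ = +∞`). -/
noncomputable def coneBeta (C : Set E) (v w : E) : ℝ≥0∞ :=
  sInf {s : ℝ≥0∞ | ∃ t : ℝ, 0 < t ∧ s = ENNReal.ofReal t ∧ t • v - w ∈ C}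

/-- The projective metric `θ(v,w) = log (β_C(v,w) / α_C(v,w)) ∈ [0,∞]`. -/
noncomputable def coneTheta (C : Set E) (v w : E) : EReal :=
  ENNReal.log (coneBeta C v w / coneAlpha C v w)

/-!
Squeeze `w` between `t • v` and `s • v` with `t`, `s` close to `α₁(v, w)` and `β₁(v, w)`. The
differences `a = L w - t • L v` and `b = s • L v - L w` lie in `C₂` at `θ₂`-distance at most `D`, so
`b - ρ • a` and `l • a - b` lie in `C₂` with `l / ρ` close to `e^D`. Solving for `L w` squeezes it
between `(s + l t) / (1 + l) • L v` and `(s + ρ t) / (1 + ρ) • L v`, and Bernoulli's inequality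
`y ^ (1 / K) ≤ 1 + (y - 1) / K` bounds the logarithm of the ratio of these two factors by
`(1 - 1 / K) log (s / t)` for any `K ≥ l / ρ`. Letting `t`, `s`, `K` tend to `α₁`, `β₁`, `e^D`
gives the contraction factor `1 - e^(-D)`.
-/

open Real

section ConeMetric

variable {C : Set E} {v w : E}

theorem IsProjCone.pos_of_smul_mem (hC : IsProjCone C) (hv : v ∈ C) {a : ℝ} (ha : a • v ∈ C) :
    0 < a := by
  by_contra! ha₀
  rcases ha₀.eq_or_lt with rfl | hneg
  · exact hC.not_zero (by simpa using ha)
  · have h₀ : a • v + (-a) • v ∈ C := hC.add_mem _ ha _ (hC.smul_mem v hv _ (neg_pos.2 hneg))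
    exact hC.not_zero (by simpa [← add_smul] using h₀)

theorem IsProjCone.lt_of_sub_mem (hC : IsProjCone C) (hv : v ∈ C) {t s : ℝ}
    (hwt : w - t • v ∈ C) (hsw : s • v - w ∈ C) : t < s := by
  have hsum : (s - t) • v ∈ C := by
    convert hC.add_mem _ hwt _ hsw using 1
    module
  exact sub_pos.1 (hC.pos_of_smul_mem hv hsum)

theorem coneTheta_le_log_of_sub_mem {t s : ℝ} (ht : 0 < t) (hs : 0 < s)
    (hwt : w - t • v ∈ C) (hsw : s • v - w ∈ C) : coneTheta C v w ≤ (log (s / t) : ℝ) := by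
  have hβ : coneBeta C v w ≤ ENNReal.ofReal s := sInf_le ⟨s, hs, rfl, hsw⟩
  have hα : ENNReal.ofReal t ≤ coneAlpha C v w := le_sSup ⟨t, ht, rfl, hwt⟩
  rw [coneTheta, ← ENNReal.log_ofReal_of_pos (div_pos hs ht), ENNReal.ofReal_div_of_pos ht]
  exact ENNReal.log_monotone (ENNReal.div_le_div hβ hα)

theorem IsProjCone.mem_algClosure (hC : IsProjCone C) (hv : v ∈ C) : v ∈ algClosure C := by
  refine ⟨v, hv, fun ε hε => ⟨ε / 2, by linarith, by linarith, ?_⟩⟩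
  convert hC.smul_mem v hv (1 + ε / 2) (by linarith) using 1
  module

theorem IsProjCone.neg_notMem_algClosure (hC : IsProjCone C) (hv : v ∈ C) :
    -v ∉ algClosure C := by
  intro h
  have h₀ : v ∈ algClosure C ∩ -algClosure C := ⟨hC.mem_algClosure hv, by simpa using h⟩
  rw [hC.sep] at h₀
  exact hC.not_zero (h₀ ▸ hv)

theorem IsProjCone.coneBeta_ne_zero (hC : IsProjCone C) (hv : v ∈ C) (hw : w ∈ C) :
    coneBeta C v w ≠ 0 := by
  refine fun hβ => hC.neg_notMem_algClosure hw ⟨v, hv, fun ε hε => ?_⟩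
  have : coneBeta C v w < ENNReal.ofReal ε := by simpa [hβ] using hε
  obtain ⟨_, ⟨s, hs, rfl, hsw⟩, hsε⟩ := sInf_lt_iff.1 this
  exact ⟨s, hs, (ENNReal.ofReal_lt_ofReal_iff hε).1 hsε, by rwa [neg_add_eq_sub]⟩

theorem IsProjCone.coneAlpha_ne_top (hC : IsProjCone C) (hv : v ∈ C) (hw : w ∈ C) :
    coneAlpha C v w ≠ ⊤ := by
  refine fun hα => hC.neg_notMem_algClosure hv ⟨w, hw, fun ε hε => ?_⟩
  have : ENNReal.ofReal ε⁻¹ < coneAlpha C v w := hα ▸ ENNReal.ofReal_lt_top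
  obtain ⟨_, ⟨t, ht, rfl, hwt⟩, htε⟩ := lt_sSup_iff.1 this
  refine ⟨t⁻¹, inv_pos.2 ht, inv_lt_of_inv_lt₀ hε ((ENNReal.ofReal_lt_ofReal_iff ht).1 htε), ?_⟩
  convert hC.smul_mem _ hwt t⁻¹ (inv_pos.2 ht) using 1
  match_scalars <;> field_simp

theorem IsProjCone.exists_sub_mem_of_coneTheta_lt (hC : IsProjCone C) (hv : v ∈ C) (hw : w ∈ C)
    {r : ℝ} (h : coneTheta C v w < r) :
    ∃ t s : ℝ, 0 < t ∧ w - t • v ∈ C ∧ s • v - w ∈ C ∧ s < exp r * t := by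
  rw [coneTheta, ← log_exp r, ← ENNReal.log_ofReal_of_pos (exp_pos r), ENNReal.log_lt_log_iff,
    ENNReal.div_lt_iff (Or.inr (hC.coneBeta_ne_zero hv hw)) (Or.inl (hC.coneAlpha_ne_top hv hw)),
    coneAlpha, ENNReal.mul_sSup, lt_biSup_iff] at h
  obtain ⟨_, ⟨t, ht, rfl, hwt⟩, hβ⟩ := h
  obtain ⟨_, ⟨s, -, rfl, hsw⟩, hst⟩ := sInf_lt_iff.1 hβ
  rw [← ENNReal.ofReal_mul (exp_pos r).le, ENNReal.ofReal_lt_ofReal_iff (by positivity)] at hst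
  exact ⟨t, s, ht, hwt, hsw, hst⟩

theorem IsProjCone.coneTheta_nonneg (hC : IsProjCone C) (hv : v ∈ C) (hw : w ∈ C) :
    0 ≤ coneTheta C v w := by
  by_contra! h
  obtain ⟨t, s, -, hwt, hsw, hst⟩ := hC.exists_sub_mem_of_coneTheta_lt hv hw (r := 0) h
  rw [exp_zero, one_mul] at hst
  exact hst.not_gt (hC.lt_of_sub_mem hv hwt hsw)

theorem log_mul_div_mul_le_one_sub_inv_mul_log {y ρ l K : ℝ} (hy : 1 ≤ y) (hρ : 0 < ρ)
    (hl : 0 < l) (hK : 1 ≤ K) (hlK : l ≤ K * ρ) :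
    log ((y + ρ) * (1 + l) / ((1 + ρ) * (y + l))) ≤ (1 - K⁻¹) * log y := by
  have hy₀ : 0 < y := by linarith
  have hK₀ : 0 < K := by linarith
  have hmono : (y + ρ) * (1 + l) / ((1 + ρ) * (y + l)) ≤
      (y + ρ) * (1 + K * ρ) / ((1 + ρ) * (y + K * ρ)) := by
    rw [div_le_div_iff₀ (by positivity) (by positivity)]
    nlinarith [mul_nonneg (mul_nonneg (by positivity : (0 : ℝ) ≤ (y + ρ) * (1 + ρ))
      (sub_nonneg.2 hlK)) (sub_nonneg.2 hy)]
  have hbernoulli : y ^ K⁻¹ ≤ 1 + K⁻¹ * (y - 1) := by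
    simpa using rpow_one_add_le_one_add_mul_self (s := y - 1) (by linarith)
      (inv_nonneg.2 hK₀.le) (inv_le_one_of_one_le₀ hK)
  have hpoly : (y + ρ) * (1 + K * ρ) * (1 + K⁻¹ * (y - 1)) ≤ y * ((1 + ρ) * (y + K * ρ)) := by
    have hgap : y * ((1 + ρ) * (y + K * ρ)) - (y + ρ) * (1 + K * ρ) * (1 + K⁻¹ * (y - 1)) =
        (1 - K⁻¹) * (y - 1) * (y + ρ + K * ρ ^ 2) := by
      field_simp
      ring
    have hK' : 0 ≤ 1 - K⁻¹ := sub_nonneg.2 (inv_le_one_of_one_le₀ hK)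
    nlinarith [mul_nonneg (mul_nonneg hK' (sub_nonneg.2 hy)) (by positivity : 0 ≤ y + ρ + K * ρ ^ 2)]
  have hratio : (y + ρ) * (1 + l) / ((1 + ρ) * (y + l)) ≤ y ^ (1 - K⁻¹) := by
    rw [rpow_sub hy₀, rpow_one, le_div_iff₀ (rpow_pos_of_pos hy₀ _)]
    refine (mul_le_mul_of_nonneg_right hmono (rpow_pos_of_pos hy₀ _).le).trans ?_
    rw [div_mul_eq_mul_div, div_le_iff₀ (by positivity)]
    exact (mul_le_mul_of_nonneg_left hbernoulli (by positivity)).trans hpoly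
  calc log ((y + ρ) * (1 + l) / ((1 + ρ) * (y + l))) ≤ log (y ^ (1 - K⁻¹)) :=
        log_le_log (by positivity) hratio
    _ = (1 - K⁻¹) * log y := log_rpow hy₀ _

theorem IsProjCone.coneTheta_le_of_coneTheta_sub_lt (hC : IsProjCone C) {t s : ℝ} (ht : 0 < t)
    (hts : t < s) (hwt : w - t • v ∈ C) (hsw : s • v - w ∈ C) {d : ℝ}
    (hd : coneTheta C (w - t • v) (s • v - w) < d) :
    coneTheta C v w ≤ ((1 - exp (-d)) * log (s / t) : ℝ) := by
  obtain ⟨ρ, l, hρ, hρmem, hlmem, hlρ⟩ := hC.exists_sub_mem_of_coneTheta_lt hwt hsw hd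
  have hρl : ρ < l := hC.lt_of_sub_mem hwt hρmem hlmem
  have hl : 0 < l := hρ.trans hρl
  have hs : 0 < s := ht.trans hts
  have hK : 1 ≤ exp d := by nlinarith
  have hupper : ((s + ρ * t) / (1 + ρ)) • v - w ∈ C := by
    convert hC.smul_mem _ hρmem (1 + ρ)⁻¹ (by positivity) using 1
    match_scalars <;> field_simp <;> ring
  have hlower : w - ((s + l * t) / (1 + l)) • v ∈ C := by
    convert hC.smul_mem _ hlmem (1 + l)⁻¹ (by positivity) using 1
    match_scalars <;> field_simp <;> ring
  refine (coneTheta_le_log_of_sub_mem (by positivity) (by positivity) hlower hupper).trans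
    (EReal.coe_le_coe_iff.2 ?_)
  calc log ((s + ρ * t) / (1 + ρ) / ((s + l * t) / (1 + l)))
      = log ((s / t + ρ) * (1 + l) / ((1 + ρ) * (s / t + l))) := by
        congr 1
        field_simp
    _ ≤ (1 - (exp d)⁻¹) * log (s / t) :=
        log_mul_div_mul_le_one_sub_inv_mul_log ((one_le_div ht).2 hts.le) hρ hl hK hlρ.le
    _ = (1 - exp (-d)) * log (s / t) := by rw [exp_neg]

end ConeMetric

theorem coneTheta_map_le_mul_of_lt {E₁ E₂ : Type*} [AddCommGroup E₁] [Module ℝ E₁]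
    [AddCommGroup E₂] [Module ℝ E₂] {C₁ : Set E₁} {C₂ : Set E₂} (hC₁ : IsProjCone C₁)
    (hC₂ : IsProjCone C₂) {L : E₁ →ₗ[ℝ] E₂} (hL : ∀ v ∈ C₁, L v ∈ C₂) {d : ℝ}
    (hd : ∀ v ∈ C₁, ∀ w ∈ C₁, coneTheta C₂ (L v) (L w) < d) {v w : E₁} (hv : v ∈ C₁)
    (hw : w ∈ C₁) {r : ℝ} (hr : coneTheta C₁ v w < r) :
    coneTheta C₂ (L v) (L w) ≤ ((1 - exp (-d)) * r : ℝ) := by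
  obtain ⟨t, s, ht, hwt, hsw, hst⟩ := hC₁.exists_sub_mem_of_coneTheta_lt hv hw hr
  have hts := hC₁.lt_of_sub_mem hv hwt hsw
  have hd₀ : 0 < d := EReal.coe_pos.1
    ((hC₂.coneTheta_nonneg (hL v hv) (hL v hv)).trans_lt (hd v hv v hv))
  have himage := hd _ hwt _ hsw
  rw [map_sub, map_smul, map_sub, map_smul] at himage
  refine (hC₂.coneTheta_le_of_coneTheta_sub_lt ht hts
    (by simpa using hL _ hwt) (by simpa using hL _ hsw) himage).trans
    (EReal.coe_le_coe_iff.2 (mul_le_mul_of_nonneg_left ?_ ?_))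
  · exact (log_le_iff_le_exp (div_pos (ht.trans hts) ht)).2 ((div_le_iff₀ ht).2 hst.le)
  · exact sub_nonneg.2 (exp_le_one_iff.2 (by linarith))

theorem EReal.le_coe_of_forall_pos_le_coe {f : ℝ → ℝ} (hf : ContinuousWithinAt f (Set.Ioi 0) 0)
    {x : EReal} (h : ∀ δ > 0, x ≤ f δ) : x ≤ f 0 :=
  ge_of_tendsto ((continuous_coe_real_ereal.tendsto _).comp hf) (eventually_nhdsWithin_of_forall h)

/-- **Birkhoff's contraction theorem.** If a linear operator `L` maps the
projective cone `C₁` into the projective cone `C₂`, and the image has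
`θ₂`-diameter at most `D < ∞`, then `L` is a `(1 − e^{−D})`-contraction from
`(C₁, θ₁)` to `(C₂, θ₂)`. -/
theorem birkhoff_contraction
    {E₁ E₂ : Type*} [AddCommGroup E₁] [Module ℝ E₁] [AddCommGroup E₂] [Module ℝ E₂]
    (C₁ : Set E₁) (C₂ : Set E₂) (hC₁ : IsProjCone C₁) (hC₂ : IsProjCone C₂)
    (L : E₁ →ₗ[ℝ] E₂) (hL : ∀ v ∈ C₁, L v ∈ C₂)
    (D : ℝ) (hD : ∀ v ∈ C₁, ∀ w ∈ C₁, coneTheta C₂ (L v) (L w) ≤ (D : EReal)) :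
    ∀ v ∈ C₁, ∀ w ∈ C₁,
      coneTheta C₂ (L v) (L w) ≤ ((1 - Real.exp (-D) : ℝ) : EReal) * coneTheta C₁ v w := by
  intro v hv w hw
  have hD₀ : 0 ≤ D := EReal.coe_nonneg.1
    ((hC₂.coneTheta_nonneg (hL v hv) (hL v hv)).trans (hD v hv v hv))
  rcases eq_or_ne (coneTheta C₁ v w) ⊤ with htop | hfin
  · rw [htop]
    rcases hD₀.eq_or_lt with rfl | hDpos
    · simpa using hD v hv w hw
    · rw [EReal.mul_top_of_pos (EReal.coe_pos.2 (by simpa using hDpos))]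
      exact le_top
  set Θ := (coneTheta C₁ v w).toReal
  have hΘ : coneTheta C₁ v w = Θ := (EReal.coe_toReal hfin
    (ne_bot_of_le_ne_bot EReal.zero_ne_bot (hC₁.coneTheta_nonneg hv hw))).symm
  have hbound : ∀ δ > 0,
      coneTheta C₂ (L v) (L w) ≤ (((1 - exp (-(D + δ))) * (Θ + δ) : ℝ) : EReal) := fun δ hδ =>
    coneTheta_map_le_mul_of_lt hC₁ hC₂ hL
      (fun a ha b hb => (hD a ha b hb).trans_lt (EReal.coe_lt_coe_iff.2 (by linarith))) hv hw
      (by rw [hΘ]; exact_mod_cast (by linarith))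
  rw [hΘ, ← EReal.coe_mul]
  simpa using EReal.le_coe_of_forall_pos_le_coe (by fun_prop) hbound
end

section
/- Let γ, γ_j be metric spaces, f : γ_j → γ an α-Hölder contraction with d(f(x), f(y)) ≤ λ_s d(x,y), and φ : γ_j → ℝ with sup φ − inf φ < ε and |e^φ|_α ≤ ε · inf e^φ. Let 0 < λ_s < 1, α ∈ (0,1], and suppose κ > ε / (1 − (λ_s^α e^ε + D^α ε)) where D is a uniform diameter bound and λ_s^α e^ε + D^α ε < 1. If ρ : γ → ℝ is positive with |ρ|_α ≤ κ inf ρ, then ρ_j := (1/p) · (ρ ∘ f) · e^φ (for any integer p ≥ 1) satisfies |ρ_j|_α ≤ λ κ · inf ρ_j for some λ < 1 depending only on λ_s, ε, α, D, κ. Concretely, |ρ_j|_α / inf ρ_j ≤ (λ_s^α e^ε + D^α ε) κ + ε. -/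
/-!
Write `ρ_j = (1/p) · (ρ ∘ f) · e^φ`. The product rule for Hölder seminorms gives
`|ρ_j|_α ≤ (1/p) (|ρ ∘ f|_α sup e^φ + sup (ρ ∘ f) |e^φ|_α)`. Contraction gives
`|ρ ∘ f|_α ≤ λ_s^α κ inf ρ`, the oscillation bound gives `sup e^φ ≤ e^ε inf e^φ`, and the
diameter bound gives `sup ρ ≤ (1 + κ D^α) inf ρ`. Since `inf ρ · inf e^φ ≤ p · inf ρ_j`, this is
`|ρ_j|_α ≤ ((λ_s^α e^ε + D^α ε) κ + ε) inf ρ_j`, and the choice of `κ` makes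
`λ = λ_s^α e^ε + D^α ε + ε / κ` smaller than `1`.
-/

open Real

section

variable {X Y : Type*}

/-- The paper's cone `D(γ, κ)`, without the positivity of `ρ`. -/
def RelHolderWith [PseudoMetricSpace X] (κ α : ℝ) (ρ : X → ℝ) : Prop :=
  ∀ x y, |ρ x - ρ y| ≤ κ * (⨅ z, ρ z) * dist x y ^ α

theorem abs_mul_sub_mul_le (a b c d : ℝ) :
    |a * b - c * d| ≤ |a - c| * |b| + |c| * |b - d| := by
  calc |a * b - c * d| = |(a - c) * b + c * (b - d)| := by ring_nf
    _ ≤ |a - c| * |b| + |c| * |b - d| := by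
      rw [← abs_mul, ← abs_mul]
      exact abs_add_le _ _

theorem exp_le_exp_mul_iInf_exp {φ : X → ℝ} {ε : ℝ} {x : X} (hφ : ∀ z, φ x - φ z ≤ ε) :
    exp (φ x) ≤ exp ε * ⨅ z, exp (φ z) := by
  have : Nonempty X := ⟨x⟩
  rw [Real.mul_iInf_of_nonneg (exp_pos ε).le]
  refine le_ciInf fun z => ?_
  rw [← exp_add]
  exact exp_le_exp.2 (by linarith [hφ z])

theorem iInf_mul_iInf_le_iInf_comp_mul [Nonempty X] {u : Y → ℝ} {v : X → ℝ} (f : X → Y)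
    (hu : ∀ y, 0 ≤ u y) (hv : ∀ x, 0 ≤ v x) :
    (⨅ y, u y) * (⨅ x, v x) ≤ ⨅ x, u (f x) * v x :=
  le_ciInf fun x =>
    mul_le_mul (ciInf_le ⟨0, by rintro _ ⟨y, rfl⟩; exact hu y⟩ (f x))
      (ciInf_le ⟨0, by rintro _ ⟨x, rfl⟩; exact hv x⟩ x) (Real.iInf_nonneg hv) (hu _)

theorem abs_comp_sub_le_of_contraction [PseudoMetricSpace X] [PseudoMetricSpace Y] {ρ : Y → ℝ} {f : X → Y} {K α lam : ℝ}
    (hK : 0 ≤ K) (hα : 0 ≤ α) (hlam : 0 ≤ lam)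
    (hρ : ∀ a b, |ρ a - ρ b| ≤ K * dist a b ^ α)
    (hf : ∀ x y, dist (f x) (f y) ≤ lam * dist x y) (x y : X) :
    |ρ (f x) - ρ (f y)| ≤ K * lam ^ α * dist x y ^ α := by
  calc |ρ (f x) - ρ (f y)| ≤ K * dist (f x) (f y) ^ α := hρ _ _
    _ ≤ K * (lam * dist x y) ^ α := by gcongr; exact hf x y
    _ = K * lam ^ α * dist x y ^ α := by rw [mul_rpow hlam dist_nonneg, mul_assoc]

namespace RelHolderWith

variable [PseudoMetricSpace X] {κ α : ℝ} {ρ : X → ℝ}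

theorem le_mul_iInf {D : ℝ} (hκ : 0 ≤ κ) (hα : 0 ≤ α) (hρ0 : ∀ z, 0 ≤ ρ z)
    (hD : ∀ x y : X, dist x y ≤ D) (hρ : RelHolderWith κ α ρ) (x : X) :
    ρ x ≤ (1 + κ * D ^ α) * ⨅ z, ρ z := by
  have : Nonempty X := ⟨x⟩
  have : ρ x - κ * (⨅ z, ρ z) * D ^ α ≤ ⨅ z, ρ z := by
    refine le_ciInf fun z => ?_
    have hxz : κ * (⨅ z, ρ z) * dist x z ^ α ≤ κ * (⨅ z, ρ z) * D ^ α := by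
      have := Real.iInf_nonneg hρ0
      gcongr
      exact hD x z
    linarith [(abs_le.1 ((hρ x z).trans hxz)).2]
  linarith

theorem const_mul {c : ℝ} (hc : 0 ≤ c) (hρ : RelHolderWith κ α ρ) :
    RelHolderWith κ α (fun x => c * ρ x) := by
  intro x y
  rw [← Real.mul_iInf_of_nonneg hc, ← mul_sub, abs_mul, abs_of_nonneg hc]
  calc c * |ρ x - ρ y| ≤ c * (κ * (⨅ z, ρ z) * dist x y ^ α) := by gcongr; exact hρ x y
    _ = κ * (c * ⨅ z, ρ z) * dist x y ^ α := by ring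

theorem comp_mul_exp [PseudoMetricSpace Y] {ρ : Y → ℝ} {f : X → Y} {φ : X → ℝ} {D lam ε : ℝ}
    (hκ : 0 ≤ κ) (hα : 0 ≤ α) (hlam : 0 ≤ lam) (hε : 0 ≤ ε)
    (hD : ∀ a b : Y, dist a b ≤ D) (hf : ∀ x y, dist (f x) (f y) ≤ lam * dist x y)
    (hρ0 : ∀ y, 0 < ρ y) (hρ : RelHolderWith κ α ρ)
    (hφosc : ∀ x y, φ x - φ y ≤ ε) (hφ : RelHolderWith ε α (fun x => exp (φ x))) :
    RelHolderWith ((lam ^ α * exp ε + D ^ α * ε) * κ + ε) α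
      (fun x => ρ (f x) * exp (φ x)) := by
  intro x y
  have : Nonempty X := ⟨x⟩
  set mρ := ⨅ z, ρ z
  set me := ⨅ z, exp (φ z)
  have hmρ : 0 ≤ mρ := Real.iInf_nonneg fun z => (hρ0 z).le
  have hme : 0 ≤ me := Real.iInf_nonneg fun z => (exp_pos _).le
  have hD0 : 0 ≤ D := dist_nonneg.trans (hD (f x) (f x))
  have hρf : |ρ (f x) - ρ (f y)| ≤ κ * mρ * lam ^ α * dist x y ^ α :=
    abs_comp_sub_le_of_contraction (by positivity) hα hlam hρ hf x y
  have hsupφ : exp (φ x) ≤ exp ε * me := exp_le_exp_mul_iInf_exp (hφosc x)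
  have hsupρ : ρ (f y) ≤ (1 + κ * D ^ α) * mρ :=
    hρ.le_mul_iInf hκ hα (fun z => (hρ0 z).le) hD (f y)
  have hinf : mρ * me ≤ ⨅ z, ρ (f z) * exp (φ z) :=
    iInf_mul_iInf_le_iInf_comp_mul f (fun z => (hρ0 z).le) fun z => (exp_pos _).le
  calc |ρ (f x) * exp (φ x) - ρ (f y) * exp (φ y)|
      ≤ |ρ (f x) - ρ (f y)| * exp (φ x) + ρ (f y) * |exp (φ x) - exp (φ y)| := by
        simpa only [abs_of_pos (exp_pos _), abs_of_pos (hρ0 _)] using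
          abs_mul_sub_mul_le (ρ (f x)) (exp (φ x)) (ρ (f y)) (exp (φ y))
    _ ≤ κ * mρ * lam ^ α * dist x y ^ α * (exp ε * me)
          + (1 + κ * D ^ α) * mρ * (ε * me * dist x y ^ α) := by
        gcongr
        exact hφ x y
    _ = ((lam ^ α * exp ε + D ^ α * ε) * κ + ε) * (mρ * me) * dist x y ^ α := by ring
    _ ≤ ((lam ^ α * exp ε + D ^ α * ε) * κ + ε) * (⨅ z, ρ (f z) * exp (φ z))
          * dist x y ^ α := by gcongr

end RelHolderWith

end

theorem aux_cone_invariance_general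
    {γ γj : Type*} [MetricSpace γ] [MetricSpace γj]
    (D : ℝ) (hDγ : ∀ x y : γ, dist x y ≤ D)
    (α : ℝ) (hα0 : 0 < α)
    (lam_s : ℝ) (hls0 : 0 < lam_s)
    (f : γj → γ) (hf : ∀ x y : γj, dist (f x) (f y) ≤ lam_s * dist x y)
    (ε : ℝ) (hε : 0 < ε)
    (φ : γj → ℝ)
    (hφosc : ∀ x y : γj, φ x - φ y < ε)
    (hφHolder : ∀ x y : γj,
      |Real.exp (φ x) - Real.exp (φ y)| ≤ ε * (⨅ z, Real.exp (φ z)) * dist x y ^ α)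
    (hsmall : lam_s ^ α * Real.exp ε + D ^ α * ε < 1)
    (κ : ℝ) (hκ : ε / (1 - (lam_s ^ α * Real.exp ε + D ^ α * ε)) < κ)
    (p : ℕ)
    (ρ : γ → ℝ) (hρpos : ∀ x, 0 < ρ x)
    (hρHolder : ∀ x y : γ, |ρ x - ρ y| ≤ κ * (⨅ z, ρ z) * dist x y ^ α) :
    (∀ x y : γj,
      |(1 / p : ℝ) * ρ (f x) * Real.exp (φ x) - (1 / p : ℝ) * ρ (f y) * Real.exp (φ y)|
        ≤ ((lam_s ^ α * Real.exp ε + D ^ α * ε) * κ + ε) *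
            (⨅ z : γj, (1 / p : ℝ) * ρ (f z) * Real.exp (φ z)) * dist x y ^ α) ∧
    (∃ lam : ℝ, lam < 1 ∧ ∀ x y : γj,
      |(1 / p : ℝ) * ρ (f x) * Real.exp (φ x) - (1 / p : ℝ) * ρ (f y) * Real.exp (φ y)|
        ≤ lam * κ *
            (⨅ z : γj, (1 / p : ℝ) * ρ (f z) * Real.exp (φ z)) * dist x y ^ α) := by
  set C := lam_s ^ α * Real.exp ε + D ^ α * ε
  have hC : 0 < 1 - C := by linarith
  have hκ0 : 0 < κ := (div_pos hε hC).trans hκ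
  have hcone : RelHolderWith (C * κ + ε) α (fun z => (1 / p : ℝ) * ρ (f z) * Real.exp (φ z)) := by
    simpa only [mul_assoc] using
      (RelHolderWith.comp_mul_exp hκ0.le hα0.le hls0.le hε.le hDγ hf hρpos hρHolder
        (fun x y => (hφosc x y).le) hφHolder).const_mul (c := 1 / p) (by positivity)
  refine ⟨hcone, C + ε / κ, ?_, ?_⟩
  · have : ε / κ < 1 - C := by
      rw [div_lt_iff₀ hκ0]
      rw [div_lt_iff₀ hC] at hκ
      linarith
    linarith
  · rwa [add_mul, div_mul_cancel₀ ε hκ0.ne']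

/-- Invariance of the auxiliary Hölder cones under the transfer operator:
if `ρ` lies in the cone `D(γ,κ)` then `ρ_j = (1/p)·(ρ∘f)·e^φ` lies in the cone
`D(γ_j, λκ)` for some `λ < 1`; concretely
`|ρ_j|_α / inf ρ_j ≤ (λ_s^α e^ε + D^α ε) κ + ε`. -/
theorem aux_cone_invariance
    {γ γj : Type*} [MetricSpace γ] [Nonempty γ] [MetricSpace γj] [Nonempty γj]
    (D : ℝ) (hDγ : ∀ x y : γ, dist x y ≤ D) (hDγj : ∀ x y : γj, dist x y ≤ D)
    (α : ℝ) (hα0 : 0 < α) (hα1 : α ≤ 1)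
    (lam_s : ℝ) (hls0 : 0 < lam_s) (hls1 : lam_s < 1)
    (f : γj → γ) (hf : ∀ x y : γj, dist (f x) (f y) ≤ lam_s * dist x y)
    (ε : ℝ) (hε : 0 < ε)
    (φ : γj → ℝ)
    (hφosc : ∀ x y : γj, φ x - φ y < ε)
    (hφHolder : ∀ x y : γj,
      |Real.exp (φ x) - Real.exp (φ y)| ≤ ε * (⨅ z, Real.exp (φ z)) * dist x y ^ α)
    (hsmall : lam_s ^ α * Real.exp ε + D ^ α * ε < 1)
    (κ : ℝ) (hκ : ε / (1 - (lam_s ^ α * Real.exp ε + D ^ α * ε)) < κ)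
    (p : ℕ) (hp : 1 ≤ p)
    (ρ : γ → ℝ) (hρpos : ∀ x, 0 < ρ x)
    (hρHolder : ∀ x y : γ, |ρ x - ρ y| ≤ κ * (⨅ z, ρ z) * dist x y ^ α) :
    (∀ x y : γj,
      |(1 / p : ℝ) * ρ (f x) * Real.exp (φ x) - (1 / p : ℝ) * ρ (f y) * Real.exp (φ y)|
        ≤ ((lam_s ^ α * Real.exp ε + D ^ α * ε) * κ + ε) *
            (⨅ z : γj, (1 / p : ℝ) * ρ (f z) * Real.exp (φ z)) * dist x y ^ α) ∧
    (∃ lam : ℝ, lam < 1 ∧ ∀ x y : γj,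
      |(1 / p : ℝ) * ρ (f x) * Real.exp (φ x) - (1 / p : ℝ) * ρ (f y) * Real.exp (φ y)|
        ≤ lam * κ *
            (⨅ z : γj, (1 / p : ℝ) * ρ (f z) * Real.exp (φ z)) * dist x y ^ α) :=
  aux_cone_invariance_general D hDγ α hα0 lam_s hls0 f hf ε hε φ hφosc hφHolder hsmall κ hκ p ρ
    hρpos hρHolder
end

section
/- Let M, N be compact metric spaces, f : M → M, g : N → N, and Π : Λ ⊂ M → N with Π∘f = g∘Π. Assume: (i) g^n restricted to δ(n)-balls is λ_s^n-Lipschitz in the sense that d(z,w) < δ(n) implies d(g^n z, g^n w) < λ_s^n with 0 < λ_s < 1; (ii) f contracts fibers: d(f(z),f(w)) ≤ λ_s d(z,w) for z,w in the same fiber Π⁻¹(y); (iii) there exist holonomies π between fibers with (1/C)[d(ŷ,x̂) + d(π(x),y)] ≤ d(x,y) ≤ C[d(x̂,ŷ) + d(π(x),y)] compatible with f. If P⁰_n is a partition of N with diameter less than δ(n), then the partition P_n := f^n(Π⁻¹(P⁰_n)) of Λ has diameter at most C(1 + diam M)·λ_s^n; in particular diam(P_n) → 0. -/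
/-- The partitions `P_n = f^n(Π⁻¹(P⁰_n))` have exponentially small diameter:
if `P⁰` has diameter `< δ(n)`, the quotient map `g` turns `δ(n)`-close points
into `λ_sⁿ`-close points after `n` iterates, `f` contracts fibers by `λ_s`,
and `f`-equivariant holonomies compare the metric of `M` with the fiber/base
decomposition up to the constant `C`, then any two points of a piece of `P_n`
are at distance at most `C(1 + diam M) λ_sⁿ`. -/
theorem partition_diameter_decay
    {M N : Type*} [MetricSpace M] [MetricSpace N]
    (f : M → M) (g : N → N) (proj : M → N)
    (hsemi : proj ∘ f = g ∘ proj)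
    (lam_s : ℝ) (hls0 : 0 < lam_s) (hls1 : lam_s < 1)
    (C : ℝ) (hC : 0 < C)
    (diamM : ℝ) (hdiamM : ∀ z w : M, dist z w ≤ diamM)
    (π : N → N → M → M)
    (hπfiber : ∀ a b : N, ∀ z : M, proj z = a → proj (π a b z) = b)
    (hcompare : ∀ x y : M,
      (1 / C) * (dist (proj x) (proj y) + dist (π (proj x) (proj y) x) y)
          ≤ dist x y ∧
      dist x y
          ≤ C * (dist (proj x) (proj y) + dist (π (proj x) (proj y) x) y))
    (hequiv : ∀ a b : N, ∀ z : M, proj z = a →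
      f (π a b z) = π (g a) (g b) (f z))
    (hfib : ∀ z w : M, proj z = proj w → dist (f z) (f w) ≤ lam_s * dist z w)
    (n : ℕ) (δ : ℝ) (hδ : 0 < δ)
    (hgn : ∀ z w : N, dist z w < δ → dist (g^[n] z) (g^[n] w) < lam_s ^ n) :
    ∀ A : Set N, (∀ z ∈ A, ∀ w ∈ A, dist z w < δ) →
      ∀ x y : M, proj x ∈ A → proj y ∈ A →
        dist (f^[n] x) (f^[n] y) ≤ C * (1 + diamM) * lam_s ^ n := by
  intro A hA x y hx hy
  -- semiconjugacy iterated
  have hsemi' : ∀ (k : ℕ) (z : M), proj (f^[k] z) = g^[k] (proj z) := by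
    intro k
    induction k with
    | zero => intro z; simp
    | succ k ih =>
      intro z
      rw [Function.iterate_succ_apply', Function.iterate_succ_apply']
      have := congrFun hsemi (f^[k] z)
      simp only [Function.comp_apply] at this
      rw [this, ih]
  -- fiber contraction iterated
  have hfib' : ∀ (k : ℕ) (z w : M), proj z = proj w →
      dist (f^[k] z) (f^[k] w) ≤ lam_s ^ k * dist z w := by
    intro k
    induction k with
    | zero => intro z w _; simp
    | succ k ih =>
      intro z w h
      rw [Function.iterate_succ_apply', Function.iterate_succ_apply']
      have hpk : proj (f^[k] z) = proj (f^[k] w) := by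
        rw [hsemi', hsemi', h]
      calc dist (f (f^[k] z)) (f (f^[k] w)) ≤ lam_s * dist (f^[k] z) (f^[k] w) :=
            hfib _ _ hpk
        _ ≤ lam_s * (lam_s ^ k * dist z w) := by
            exact mul_le_mul_of_nonneg_left (ih z w h) hls0.le
        _ = lam_s ^ (k+1) * dist z w := by ring
  -- holonomy equivariance iterated
  have hequiv' : ∀ (k : ℕ) (a b : N) (z : M), proj z = a →
      f^[k] (π a b z) = π (g^[k] a) (g^[k] b) (f^[k] z) := by
    intro k
    induction k with
    | zero => intro a b z _; simp
    | succ k ih =>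
      intro a b z hz
      rw [Function.iterate_succ_apply', Function.iterate_succ_apply',
        Function.iterate_succ_apply', ih a b z hz]
      rw [Function.iterate_succ_apply' f k z]
      exact hequiv _ (g^[k] b) _ (by rw [hsemi' k z, hz])
  set a := proj x with ha
  set b := proj y with hb
  have h1 : proj (f^[n] x) = g^[n] a := hsemi' n x
  have h2 : proj (f^[n] y) = g^[n] b := hsemi' n y
  have hcmp := (hcompare (f^[n] x) (f^[n] y)).2
  rw [h1, h2] at hcmp
  have hbase : dist (g^[n] a) (g^[n] b) < lam_s ^ n :=
    hgn _ _ (hA _ hx _ hy)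
  have hπeq : π (g^[n] a) (g^[n] b) (f^[n] x) = f^[n] (π a b x) :=
    (hequiv' n a b x rfl).symm
  have hsame : proj (π a b x) = proj y := by rw [hπfiber a b x rfl]
  have hfibd : dist (f^[n] (π a b x)) (f^[n] y) ≤ lam_s ^ n * diamM := by
    calc dist (f^[n] (π a b x)) (f^[n] y) ≤ lam_s ^ n * dist (π a b x) y :=
          hfib' n _ _ hsame
      _ ≤ lam_s ^ n * diamM :=
          mul_le_mul_of_nonneg_left (hdiamM _ _) (pow_nonneg hls0.le n)
  calc dist (f^[n] x) (f^[n] y)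
      ≤ C * (dist (g^[n] a) (g^[n] b) + dist (π (g^[n] a) (g^[n] b) (f^[n] x)) (f^[n] y)) := hcmp
    _ ≤ C * (lam_s ^ n + lam_s ^ n * diamM) := by
        apply mul_le_mul_of_nonneg_left _ hC.le
        rw [hπeq]
        exact add_le_add hbase.le hfibd
    _ = C * (1 + diamM) * lam_s ^ n := by ring
end
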